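/- arXiv:2502.17047 — 4 statements merged into one kernel-verified Lean document; each statement's English description precedes it below -/
import Mathlib

section
/- Let x(n) = Σ_{i=1}^M b_i z_i^n with pairwise distinct poles z_i and nonzero amplitudes b_i, let M ≤ L ≤ N−M, and form the Hankel matrices X_0, X_1 ∈ ℂ^{(N−L)×L} with X_0(n,l) = x(n+l), X_1(n,l) = x(n+l+1). Assume Z_R Z_R^H is invertible and set Z_R^† = Z_R^H (Z_R Z_R^H)^{−1}. Then for every 1 ≤ i ≤ M, the i-th column q_i of Z_R^† satisfies (X_1 − z_i X_0) q_i = 0. -/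
open Matrix

/-! Since `x` is a sum of exponentials, `X₁ - c X₀ = Z_L B (Z - c) Z_R` for every `c`. As
`Z_R Z_R^† = 1`, we get `Z_R qᵢ = eᵢ`, so `(X₁ - zᵢ X₀) qᵢ` is the `i`-th column of
`Z_L B (Z - zᵢ)`, all of whose entries carry the factor `zᵢ - zᵢ = 0`. -/

namespace Matrix

variable {m n R : Type*} [Fintype m] [Fintype n] [DecidableEq m] [Semiring R]

theorem mulVec_col_eq_single_of_mul_eq_one {A : Matrix m n R} {B : Matrix n m R}
    (h : A * B = 1) (i : m) : A *ᵥ (fun l => B l i) = Pi.single i 1 := by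
  rw [← col_apply', ← mulVec_single_one, mulVec_mulVec, h, one_mulVec]

end Matrix

theorem hankel_shift_sub_smul_eq_mul {R ι : Type*} [CommRing R] [Fintype ι] {p L : ℕ}
    (z b : ι → R) (x : ℕ → R) (hx : ∀ n, x n = ∑ i, b i * z i ^ n)
    (X0 X1 : Matrix (Fin p) (Fin L) R)
    (hX0 : ∀ n l, X0 n l = x (n.1 + l.1))
    (hX1 : ∀ n l, X1 n l = x (n.1 + l.1 + 1))
    (ZR : Matrix ι (Fin L) R) (hZR : ∀ i l, ZR i l = z i ^ l.1) (c : R) :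
    X1 - c • X0 = of (fun n i => b i * (z i - c) * z i ^ n.1) * ZR := by
  ext n l
  simp only [Matrix.sub_apply, Matrix.smul_apply, hX0, hX1, hx, mul_apply, of_apply, hZR,
    smul_eq_mul, Finset.mul_sum, ← Finset.sum_sub_distrib]
  refine Finset.sum_congr rfl fun i _ => ?_
  ring

theorem matrix_pencil_right_eigenvectors_general
    (N L M : ℕ)
    (z b : Fin M → ℂ)
    (x : ℕ → ℂ) (hx : ∀ n, x n = ∑ i, b i * z i ^ n)
    (X0 X1 : Matrix (Fin (N - L)) (Fin L) ℂ)
    (hX0 : ∀ n l, X0 n l = x (n.1 + l.1))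
    (hX1 : ∀ n l, X1 n l = x (n.1 + l.1 + 1))
    (ZR : Matrix (Fin M) (Fin L) ℂ) (hZR : ∀ i l, ZR i l = z i ^ l.1)
    (hinv : IsUnit (ZR * ZR.conjTranspose)) :
    ∀ i : Fin M,
      (X1 - z i • X0).mulVec
        (fun l => (ZR.conjTranspose * (ZR * ZR.conjTranspose)⁻¹) l i) = 0 := by
  intro i
  have hright : ZR * (ZRᴴ * (ZR * ZRᴴ)⁻¹) = 1 := by
    rw [← Matrix.mul_assoc, mul_nonsing_inv _ ((isUnit_iff_isUnit_det _).mp hinv)]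
  rw [hankel_shift_sub_smul_eq_mul z b x hx X0 X1 hX0 hX1 ZR hZR (z i), ← mulVec_mulVec,
    mulVec_col_eq_single_of_mul_eq_one hright, mulVec_single_one]
  ext n
  simp only [col_apply, of_apply, sub_self, mul_zero, zero_mul, Pi.zero_apply]

/-- (Right-eigenvector assertion of the noiseless Matrix Pencil theorem.)
For the noiseless Hankel matrices `X₀`, `X₁` of `x(n) = Σᵢ bᵢ zᵢⁿ`, the `i`-th column `qᵢ` of
`Z_R^† = Z_Rᴴ (Z_R Z_Rᴴ)⁻¹` satisfies `(X₁ - zᵢ X₀) qᵢ = 0`. -/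
theorem matrix_pencil_right_eigenvectors
    (N L M : ℕ) (hML : M ≤ L) (hLN : L ≤ N - M)
    (z b : Fin M → ℂ) (hz : Function.Injective z) (hb : ∀ i, b i ≠ 0)
    (x : ℕ → ℂ) (hx : ∀ n, x n = ∑ i, b i * z i ^ n)
    (X0 X1 : Matrix (Fin (N - L)) (Fin L) ℂ)
    (hX0 : ∀ n l, X0 n l = x (n.1 + l.1))
    (hX1 : ∀ n l, X1 n l = x (n.1 + l.1 + 1))
    (ZR : Matrix (Fin M) (Fin L) ℂ) (hZR : ∀ i l, ZR i l = z i ^ l.1)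
    (hinv : IsUnit (ZR * ZR.conjTranspose)) :
    ∀ i : Fin M,
      (X1 - z i • X0).mulVec
        (fun l => (ZR.conjTranspose * (ZR * ZR.conjTranspose)⁻¹) l i) = 0 :=
  matrix_pencil_right_eigenvectors_general N L M z b x hx X0 X1 hX0 hX1 ZR hZR hinv
end

section
/- Let x(n) = Σ_{i=1}^M b_i z_i^n with pairwise distinct poles z_i and nonzero amplitudes b_i, let M ≤ L ≤ N−M, and form the Hankel matrices X_0, X_1 ∈ ℂ^{(N−L)×L} with X_0(n,l) = x(n+l), X_1(n,l) = x(n+l+1). Assume Z_L^H Z_L is invertible and set Z_L^† = (Z_L^H Z_L)^{−1} Z_L^H. Then for every 1 ≤ i ≤ M, the i-th row p_i^H of Z_L^† satisfies p_i^H (X_1 − z_i X_0) = 0. -/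
/-!
`X₁ - zᵢ X₀` is the Hankel matrix of `x (n + 1) - zᵢ x n = ∑ j, b j (z j - z i) z j ^ n`, so it
factors as `Z_L diag(c) Z_R` with `c i = 0`. A row `pᵢᴴ` of a left inverse of `Z_L` picks out the
`i`-th row of `diag(c) Z_R`, which vanishes.
-/

open Matrix

namespace Matrix

variable {ι R : Type*} [Fintype ι] [CommSemiring R]

/-- `vandermondeRect (N - L) z` is the paper's `Z_L`, and `(vandermondeRect L z)ᵀ` its `Z_R`. -/
def vandermondeRect (p : ℕ) (z : ι → R) : Matrix (Fin p) ι R :=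
  of fun n i => z i ^ (n : ℕ)

theorem hankel_eq_vandermondeRect_mul_diagonal_mul [DecidableEq ι] {x : ℕ → R} {b z : ι → R}
    (hx : ∀ n, x n = ∑ i, b i * z i ^ n) (p q : ℕ) :
    of (fun (n : Fin p) (l : Fin q) => x (n + l)) =
      vandermondeRect p z * diagonal b * (vandermondeRect q z)ᵀ := by
  ext n l
  rw [mul_apply]
  simp only [mul_diagonal, of_apply, transpose_apply, vandermondeRect, hx, pow_add]
  exact Finset.sum_congr rfl fun i _ => by ring

theorem vecMul_row_mul_of_mul_eq_one {m n o : Type*} [Fintype m] [DecidableEq m] [Fintype n]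
    {P : Matrix m n R} {A : Matrix n m R} (hPA : P * A = 1) (i : m) (B : Matrix m o R) :
    P i ᵥ* (A * B) = B i := by
  rw [← mul_apply_eq_vecMul, ← Matrix.mul_assoc, hPA, Matrix.one_mul]

end Matrix

theorem matrix_pencil_left_eigenvectors_general
    (N L M : ℕ)
    (z b : Fin M → ℂ)
    (x : ℕ → ℂ) (hx : ∀ n, x n = ∑ i, b i * z i ^ n)
    (X0 X1 : Matrix (Fin (N - L)) (Fin L) ℂ)
    (hX0 : ∀ n l, X0 n l = x (n.1 + l.1))
    (hX1 : ∀ n l, X1 n l = x (n.1 + l.1 + 1))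
    (ZL : Matrix (Fin (N - L)) (Fin M) ℂ) (hZL : ∀ n i, ZL n i = z i ^ n.1)
    (hinv : IsUnit (ZL.conjTranspose * ZL)) :
    ∀ i : Fin M,
      Matrix.vecMul
        (fun n => ((ZL.conjTranspose * ZL)⁻¹ * ZL.conjTranspose) i n)
        (X1 - z i • X0) = 0 := by
  intro i
  set c : Fin M → ℂ := fun j => b j * (z j - z i)
  have hpencil : ∀ n, x (n + 1) - z i * x n = ∑ j, c j * z j ^ n := fun n => by
    simp only [hx, c, Finset.mul_sum, ← Finset.sum_sub_distrib, pow_succ]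
    exact Finset.sum_congr rfl fun j _ => by ring
  have hZL_eq : ZL = vandermondeRect (N - L) z := by ext n j; exact hZL n j
  have hfactor : X1 - z i • X0 = ZL * (diagonal c * (vandermondeRect L z)ᵀ) := by
    rw [hZL_eq, ← Matrix.mul_assoc, ← hankel_eq_vandermondeRect_mul_diagonal_mul hpencil]
    ext n l
    simp only [Matrix.sub_apply, Matrix.smul_apply, hX0, hX1, of_apply, smul_eq_mul]
  have hleft : (ZL.conjTranspose * ZL)⁻¹ * ZL.conjTranspose * ZL = 1 := by
    rw [Matrix.mul_assoc, nonsing_inv_mul _ ((isUnit_iff_isUnit_det _).mp hinv)]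
  rw [hfactor, vecMul_row_mul_of_mul_eq_one hleft]
  ext l
  simp [c]

/-- (Left-eigenvector assertion of the noiseless Matrix Pencil theorem.)
For the noiseless Hankel matrices `X₀`, `X₁` of `x(n) = Σᵢ bᵢ zᵢⁿ`, the `i`-th row `pᵢᴴ` of
`Z_L^† = (Z_Lᴴ Z_L)⁻¹ Z_Lᴴ` satisfies `pᵢᴴ (X₁ - zᵢ X₀) = 0`. -/
theorem matrix_pencil_left_eigenvectors
    (N L M : ℕ) (hML : M ≤ L) (hLN : L ≤ N - M)
    (z b : Fin M → ℂ) (hz : Function.Injective z) (hb : ∀ i, b i ≠ 0)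
    (x : ℕ → ℂ) (hx : ∀ n, x n = ∑ i, b i * z i ^ n)
    (X0 X1 : Matrix (Fin (N - L)) (Fin L) ℂ)
    (hX0 : ∀ n l, X0 n l = x (n.1 + l.1))
    (hX1 : ∀ n l, X1 n l = x (n.1 + l.1 + 1))
    (ZL : Matrix (Fin (N - L)) (Fin M) ℂ) (hZL : ∀ n i, ZL n i = z i ^ n.1)
    (hinv : IsUnit (ZL.conjTranspose * ZL)) :
    ∀ i : Fin M,
      Matrix.vecMul
        (fun n => ((ZL.conjTranspose * ZL)⁻¹ * ZL.conjTranspose) i n)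
        (X1 - z i • X0) = 0 :=
  matrix_pencil_left_eigenvectors_general N L M z b x hx X0 X1 hX0 hX1 ZL hZL hinv
end

section
/- Let A ∈ ℂ^{n×n} be non-defective with right eigenvector basis v_1,…,v_n (columns of the invertible matrix V, A V = V Λ₀ with Λ₀ = diag(λ_1,…,λ_n)) and left eigenvectors u_1,…,u_n (rows of U^H, U^H A = Λ₀ U^H) satisfying u_k^H v_j = c_k δ_{kj} with c_k ≠ 0. Let λ_i be simple, and suppose (A + δA) ṽ_i = λ̃_i ṽ_i, where ṽ_i = v_i + Σ_{k≠i} a_k v_k and λ̃_i ≠ λ_k for all k ≠ i. Let D_i = diag(1/(c_1(λ̃_i−λ_1)), …, 0_i, …, 1/(c_n(λ̃_i−λ_n))) (with i-th diagonal entry 0), and let a ∈ ℂ^n be the coefficient vector with entries a_k (and a_i = 0). Then (I − D_i U^H δA V) a = D_i U^H δA v_i; moreover, if the spectral radius ρ(D_i U^H δA V) < 1, then I − D_i U^H δA V is invertible and a = (I − D_i U^H δA V)^{−1} D_i U^H δA v_i. -/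
open Matrix

/-!
Write the perturbed eigenvector as `ṽᵢ = V (eᵢ + a)`. Since `A V = V Λ₀` and `Uᴴ V = diag c`,
applying `Uᴴ` to `δA ṽᵢ = λ̃ᵢ ṽᵢ - A ṽᵢ` diagonalises the eigen-equation: its `k`-th entry is
`c k (λ̃ᵢ - λ k) (eᵢ + a) k`. Multiplying by `Dᵢ` cancels these factors off the `i`-th entry and
zeroes the `i`-th entry, where `eᵢ` sits and `a i = 0`; so it recovers `a` exactly, i.e.
`Dᵢ Uᴴ δA V (eᵢ + a) = a`, which is the linear system. When `ρ(Dᵢ Uᴴ δA V) < 1`, the number `1`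
lies in the resolvent set, so `1 - Dᵢ Uᴴ δA V` is invertible.
-/

theorem isUnit_one_sub_of_spectralRadius_lt_one {𝕜 A : Type*} [NormedField 𝕜] [Ring A]
    [Algebra 𝕜 A] {a : A} (h : spectralRadius 𝕜 a < 1) : IsUnit (1 - a) := by
  have h1 : (1 : 𝕜) ∈ resolventSet 𝕜 a :=
    spectrum.mem_resolventSet_of_spectralRadius_lt (by simpa using h)
  rwa [spectrum.mem_resolventSet_iff, map_one] at h1

namespace Matrix

variable {m : Type*} [Fintype m] [DecidableEq m]

theorem mulVec_perturbation_eq_of_mul_eq_diagonal {R : Type*} [CommRing R]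
    {A E V W : Matrix m m R} {lam c b : m → R} {μ : R}
    (hAV : A * V = V * diagonal lam) (hWV : W * V = diagonal c)
    (heig : (A + E) *ᵥ (V *ᵥ b) = μ • (V *ᵥ b)) :
    W *ᵥ (E *ᵥ (V *ᵥ b)) = fun k => c k * (μ - lam k) * b k := by
  have hE : E *ᵥ (V *ᵥ b) = μ • (V *ᵥ b) - A *ᵥ (V *ᵥ b) := by
    rw [eq_sub_iff_add_eq, ← add_mulVec, add_comm E A, heig]
  have hWAV : W * A * V = diagonal c * diagonal lam := by
    rw [Matrix.mul_assoc, hAV, ← Matrix.mul_assoc, hWV]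
  ext k
  rw [hE, mulVec_sub, mulVec_smul, mulVec_mulVec, mulVec_mulVec, mulVec_mulVec,
    hWAV, hWV, diagonal_mul_diagonal]
  simp only [Pi.sub_apply, Pi.smul_apply, mulVec_diagonal, smul_eq_mul]
  ring

theorem diagonal_ite_inv_mulVec_eq_update {K : Type*} [Field K] (i : m) {c lam : m → K} {μ : K}
    (hc : ∀ k ≠ i, c k ≠ 0) (hμ : ∀ k ≠ i, μ ≠ lam k) (b : m → K) :
    diagonal (fun k => if k = i then 0 else (c k * (μ - lam k))⁻¹) *ᵥ
        (fun k => c k * (μ - lam k) * b k) = Function.update b i 0 := by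
  ext k
  rw [mulVec_diagonal]
  by_cases hk : k = i
  · simp [hk]
  · have hμk : μ - lam k ≠ 0 := sub_ne_zero.mpr (hμ k hk)
    rw [if_neg hk, Function.update_of_ne hk]
    field_simp [hc k hk]

theorem one_sub_mulVec_eq_of_mulVec_add_eq {R : Type*} [Ring R] {M : Matrix m m R} {e a : m → R}
    (h : M *ᵥ (e + a) = a) : (1 - M) *ᵥ a = M *ᵥ e := by
  rw [mulVec_add] at h
  rw [sub_mulVec, one_mulVec]
  exact (eq_sub_of_add_eq h).symm

end Matrix

theorem eigenvector_perturbation_linear_system_general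
    (n : ℕ) (A δA : Matrix (Fin n) (Fin n) ℂ)
    (V U : Matrix (Fin n) (Fin n) ℂ) (lam c : Fin n → ℂ)
    (hAV : A * V = V * Matrix.diagonal lam)
    (hbiorth : U.conjTranspose * V = Matrix.diagonal c)
    (hc : ∀ k, c k ≠ 0)
    (i : Fin n)
    (lamt : ℂ) (hlamt : ∀ k, k ≠ i → lamt ≠ lam k)
    (a : Fin n → ℂ) (hai : a i = 0)
    (vt : Fin n → ℂ) (hvt : vt = (fun j => V j i) + V.mulVec a)
    (heig : (A + δA).mulVec vt = lamt • vt)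
    (Di : Matrix (Fin n) (Fin n) ℂ)
    (hDi : Di = Matrix.diagonal (fun k => if k = i then 0 else (c k * (lamt - lam k))⁻¹)) :
    (1 - Di * U.conjTranspose * δA * V).mulVec a
        = (Di * U.conjTranspose * δA).mulVec (fun j => V j i) ∧
    (spectralRadius ℂ (Di * U.conjTranspose * δA * V) < 1 →
      IsUnit (1 - Di * U.conjTranspose * δA * V) ∧
      a = (1 - Di * U.conjTranspose * δA * V)⁻¹.mulVec
            ((Di * U.conjTranspose * δA).mulVec (fun j => V j i))) := by
  have hcol : (fun j => V j i) = V *ᵥ Pi.single i 1 := (mulVec_single_one V i).symm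
  have hvt' : vt = V *ᵥ (Pi.single i 1 + a) := by rw [hvt, mulVec_add, hcol]
  have hcoeff : Function.update (Pi.single i 1 + a) i 0 = a := by
    ext k
    by_cases hk : k = i <;> simp [hk, hai]
  have hfixed : (Di * U.conjTranspose * δA * V) *ᵥ (Pi.single i 1 + a) = a := by
    rw [hvt'] at heig
    rw [← mulVec_mulVec, ← mulVec_mulVec, ← mulVec_mulVec,
      mulVec_perturbation_eq_of_mul_eq_diagonal hAV hbiorth heig, hDi,
      diagonal_ite_inv_mulVec_eq_update i (fun k _ => hc k) hlamt, hcoeff]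
  have hsystem := one_sub_mulVec_eq_of_mulVec_add_eq hfixed
  rw [← mulVec_mulVec, ← hcol] at hsystem
  refine ⟨hsystem, fun hρ => ?_⟩
  have hunit := isUnit_one_sub_of_spectralRadius_lt_one hρ
  let := hunit.invertible
  exact ⟨hunit, (inv_mulVec_eq_vec hsystem.symm).symm⟩

/-- (Paper's Lemma 1, exact form.) The coefficient vector `a` of the
eigenvector perturbation of a simple eigenvalue of a non-defective matrix satisfies
`(I - Dᵢ Uᴴ δA V) a = Dᵢ Uᴴ δA vᵢ`; and if `ρ(Dᵢ Uᴴ δA V) < 1` then `I - Dᵢ Uᴴ δA V` is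
invertible and `a = (I - Dᵢ Uᴴ δA V)⁻¹ Dᵢ Uᴴ δA vᵢ`. -/
theorem eigenvector_perturbation_linear_system
    (n : ℕ) (A δA : Matrix (Fin n) (Fin n) ℂ)
    (V U : Matrix (Fin n) (Fin n) ℂ) (lam c : Fin n → ℂ)
    (hV : IsUnit V)
    (hAV : A * V = V * Matrix.diagonal lam)
    (hUA : U.conjTranspose * A = Matrix.diagonal lam * U.conjTranspose)
    (hbiorth : U.conjTranspose * V = Matrix.diagonal c)
    (hc : ∀ k, c k ≠ 0)
    (i : Fin n) (hsimple : ∀ k, k ≠ i → lam k ≠ lam i)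
    (lamt : ℂ) (hlamt : ∀ k, k ≠ i → lamt ≠ lam k)
    (a : Fin n → ℂ) (hai : a i = 0)
    (vt : Fin n → ℂ) (hvt : vt = (fun j => V j i) + V.mulVec a)
    (heig : (A + δA).mulVec vt = lamt • vt)
    (Di : Matrix (Fin n) (Fin n) ℂ)
    (hDi : Di = Matrix.diagonal (fun k => if k = i then 0 else (c k * (lamt - lam k))⁻¹)) :
    (1 - Di * U.conjTranspose * δA * V).mulVec a
        = (Di * U.conjTranspose * δA).mulVec (fun j => V j i) ∧
    (spectralRadius ℂ (Di * U.conjTranspose * δA * V) < 1 →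
      IsUnit (1 - Di * U.conjTranspose * δA * V) ∧
      a = (1 - Di * U.conjTranspose * δA * V)⁻¹.mulVec
            ((Di * U.conjTranspose * δA).mulVec (fun j => V j i))) :=
  eigenvector_perturbation_linear_system_general n A δA V U lam c hAV hbiorth hc i lamt hlamt a hai
    vt hvt heig Di hDi
end

section
/- Let H be a complex inner product space, let a ∈ H with a ≠ 0, let e ∈ H, set r = ‖e‖/‖a‖, and assume r < 1. Then v = a + e is nonzero and ((1 − r)/(1 + r))² ≤ |⟨a, v⟩|² / (‖a‖² ‖v‖²) ≤ 1. -/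
/-! Write `v = a + e`. Since `⟪a, v⟫ = ‖a‖² + ⟪a, e⟫`, Cauchy–Schwarz gives
`|⟪a, v⟫| ≥ ‖a‖ (‖a‖ - ‖e‖)`, while the triangle inequality gives
`‖a‖ - ‖e‖ ≤ ‖v‖ ≤ ‖a‖ + ‖e‖`. Hence the cosine `|⟪a, v⟫| / (‖a‖ ‖v‖)` lies between
`(‖a‖ - ‖e‖) / (‖a‖ + ‖e‖) = (1 - r) / (1 + r)` and `1`; squaring gives the claim. -/

open scoped InnerProductSpace

section

variable {𝕜 E : Type*} [RCLike 𝕜] [NormedAddCommGroup E] [InnerProductSpace 𝕜 E]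

theorem mul_norm_sub_norm_le_norm_inner_add (a e : E) :
    ‖a‖ * (‖a‖ - ‖e‖) ≤ ‖⟪a, a + e⟫_𝕜‖ :=
  calc ‖a‖ * (‖a‖ - ‖e‖) = ‖⟪a, a⟫_𝕜‖ - ‖a‖ * ‖e‖ := by
        rw [inner_self_eq_norm_sq_to_K, norm_pow, RCLike.norm_ofReal, abs_norm]; ring
    _ ≤ ‖⟪a, a⟫_𝕜‖ - ‖⟪a, e⟫_𝕜‖ := by gcongr; exact norm_inner_le_norm a e
    _ ≤ ‖⟪a, a⟫_𝕜 + ⟪a, e⟫_𝕜‖ := norm_sub_le_norm_add _ _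
    _ = ‖⟪a, a + e⟫_𝕜‖ := by rw [inner_add_right]

theorem norm_sub_norm_div_norm_add_norm_le_norm_inner_add_div (a e : E) (he : ‖e‖ < ‖a‖) :
    (‖a‖ - ‖e‖) / (‖a‖ + ‖e‖) ≤ ‖⟪a, a + e⟫_𝕜‖ / (‖a‖ * ‖a + e‖) := by
  have ha : 0 < ‖a‖ := (norm_nonneg e).trans_lt he
  have hae : 0 < ‖a + e‖ := (sub_pos.2 he).trans_le (norm_sub_le_norm_add a e)
  rw [div_le_div_iff₀ (by positivity) (by positivity)]
  calc (‖a‖ - ‖e‖) * (‖a‖ * ‖a + e‖) ≤ (‖a‖ - ‖e‖) * (‖a‖ * (‖a‖ + ‖e‖)) := by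
        gcongr
        exact norm_add_le a e
    _ = ‖a‖ * (‖a‖ - ‖e‖) * (‖a‖ + ‖e‖) := by ring
    _ ≤ ‖⟪a, a + e⟫_𝕜‖ * (‖a‖ + ‖e‖) := by
        gcongr; exact mul_norm_sub_norm_le_norm_inner_add a e

theorem norm_inner_div_norm_mul_norm_le_one (x y : E) : ‖⟪x, y⟫_𝕜‖ / (‖x‖ * ‖y‖) ≤ 1 :=
  div_le_one_of_le₀ (norm_inner_le_norm x y) (by positivity)

end

/-- (Inequality (22) of the paper.) In a complex inner product space, if
`a ≠ 0`, `r = ‖e‖/‖a‖ < 1`, and `v = a + e`, then `v ≠ 0` and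
`((1 - r)/(1 + r))² ≤ |⟨a, v⟩|² / (‖a‖² ‖v‖²) ≤ 1`. -/
theorem similarity_measure_bounds
    {H : Type*} [NormedAddCommGroup H] [InnerProductSpace ℂ H]
    (a e : H) (ha : a ≠ 0) (hr : ‖e‖ / ‖a‖ < 1) :
    a + e ≠ 0 ∧
    ((1 - ‖e‖ / ‖a‖) / (1 + ‖e‖ / ‖a‖)) ^ 2
      ≤ ‖(inner ℂ a (a + e) : ℂ)‖ ^ 2 / (‖a‖ ^ 2 * ‖a + e‖ ^ 2) ∧
    ‖(inner ℂ a (a + e) : ℂ)‖ ^ 2 / (‖a‖ ^ 2 * ‖a + e‖ ^ 2) ≤ 1 := by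
  have ha' : 0 < ‖a‖ := norm_pos_iff.mpr ha
  have he : ‖e‖ < ‖a‖ := (div_lt_one ha').mp hr
  have hratio : (1 - ‖e‖ / ‖a‖) / (1 + ‖e‖ / ‖a‖) = (‖a‖ - ‖e‖) / (‖a‖ + ‖e‖) := by
    field_simp
  have hsq : ‖⟪a, a + e⟫_ℂ‖ ^ 2 / (‖a‖ ^ 2 * ‖a + e‖ ^ 2)
      = (‖⟪a, a + e⟫_ℂ‖ / (‖a‖ * ‖a + e‖)) ^ 2 := by
    rw [div_pow, mul_pow]
  refine ⟨norm_pos_iff.mp ((sub_pos.2 he).trans_le (norm_sub_le_norm_add a e)), ?_, ?_⟩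
  · rw [hratio, hsq]
    exact pow_le_pow_left₀ (div_nonneg (sub_pos.2 he).le (by positivity))
      (norm_sub_norm_div_norm_add_norm_le_norm_inner_add_div (𝕜 := ℂ) a e he) 2
  · rw [hsq]
    exact pow_le_one₀ (by positivity) (norm_inner_div_norm_mul_norm_le_one (𝕜 := ℂ) a (a + e))
end
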